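/- Let A ∈ C be nonzero with τ = -A² - A⁻². There exists a group homomorphism from the braid group B_3 = ⟨σ1, σ2 | σ1σ2σ1 = σ2σ1σ2⟩ to the group of units of TL_3 sending σ_i to A·1 + A⁻¹·e_i for i = 1, 2. -/

import Mathlib

noncomputable section

open scoped Classical

/-- Defining relations of the Temperley–Lieb algebra `TL₃` with parameter `τ`,
as a relation on the free associative `ℂ`-algebra on two generators. -/
inductive TLRel (τ : ℂ) : FreeAlgebra ℂ (Fin 2) → FreeAlgebra ℂ (Fin 2) → Prop
  | rel121 : TLRel τ (FreeAlgebra.ι ℂ 0 * FreeAlgebra.ι ℂ 1 * FreeAlgebra.ι ℂ 0) (FreeAlgebra.ι ℂ 0)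
  | rel212 : TLRel τ (FreeAlgebra.ι ℂ 1 * FreeAlgebra.ι ℂ 0 * FreeAlgebra.ι ℂ 1) (FreeAlgebra.ι ℂ 1)
  | rel11 : TLRel τ (FreeAlgebra.ι ℂ 0 * FreeAlgebra.ι ℂ 0) (τ • FreeAlgebra.ι ℂ 0)
  | rel22 : TLRel τ (FreeAlgebra.ι ℂ 1 * FreeAlgebra.ι ℂ 1) (τ • FreeAlgebra.ι ℂ 1)

/-- The Temperley–Lieb algebra `TL₃`. -/
abbrev TL3 (τ : ℂ) := RingQuot (TLRel τ)

/-- The generator `e₁` of `TL₃`. -/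
def e₁ (τ : ℂ) : TL3 τ := RingQuot.mkAlgHom ℂ (TLRel τ) (FreeAlgebra.ι ℂ 0)

/-- The generator `e₂` of `TL₃`. -/
def e₂ (τ : ℂ) : TL3 τ := RingQuot.mkAlgHom ℂ (TLRel τ) (FreeAlgebra.ι ℂ 1)

/-- The braid relation of `B₃` as a subset of the free group on two generators. -/
def braidRels : Set (FreeGroup (Fin 2)) :=
  {FreeGroup.of 0 * FreeGroup.of 1 * FreeGroup.of 0 *
    (FreeGroup.of 1 * FreeGroup.of 0 * FreeGroup.of 1)⁻¹}

/-- The braid group `B₃ = ⟨σ₁, σ₂ | σ₁σ₂σ₁ = σ₂σ₁σ₂⟩`. -/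
abbrev B3 := PresentedGroup braidRels

/-! With `g = a + b e` and `e² = τ e`, one has `g (b + a e) = ab + (a² + abτ + b²) e`, and for two
such quasi-idempotents with `efe = e`, `fef = f` the two sides of the braid relation differ
by `b (a² + abτ + b²) (e - f)`. The choice `a = A`, `b = A⁻¹`, `τ = -A² - A⁻²` kills the common
factor `a² + abτ + b²`, so `σᵢ ↦ A + A⁻¹ eᵢ` takes values in the units and respects the braid
relation. -/

section Skein

variable {R S : Type*} [CommRing R] [Ring S] [Algebra R S] {τ a b : R} {e f : S}

theorem skein_mul_skein_swap (he : e * e = τ • e) (hab : a ^ 2 + a * b * τ + b ^ 2 = 0) :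
    (a • 1 + b • e) * (b • 1 + a • e) = (a * b) • (1 : S) := by
  have expand : (a • 1 + b • e) * (b • 1 + a • e) =
      (a * b) • (1 : S) + (a ^ 2 + a * b * τ + b ^ 2) • e := by
    simp only [add_mul, mul_add, smul_mul_smul_comm, one_mul, mul_one, he, smul_smul]
    module
  rw [expand, hab, zero_smul, add_zero]

theorem skein_mul_skein_mul_skein (he : e * e = τ • e) (hefe : e * f * e = e) :
    (a • 1 + b • e) * (a • 1 + b • f) * (a • 1 + b • e) =
      a ^ 3 • (1 : S) + (a ^ 2 * b) • (e + f) + (a * b ^ 2) • (e * f + f * e) +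
        (b * (a ^ 2 + a * b * τ + b ^ 2)) • e := by
  simp only [add_mul, mul_add, smul_mul_smul_comm, one_mul, mul_one, he, hefe, smul_smul]
  module

theorem skein_braid (he : e * e = τ • e) (hf : f * f = τ • f) (hefe : e * f * e = e)
    (hfef : f * e * f = f) (hab : a ^ 2 + a * b * τ + b ^ 2 = 0) :
    (a • 1 + b • e) * (a • 1 + b • f) * (a • 1 + b • e) =
      (a • 1 + b • f) * (a • 1 + b • e) * (a • 1 + b • f) := by
  rw [skein_mul_skein_mul_skein he hefe, skein_mul_skein_mul_skein hf hfef, hab, add_comm f e,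
    add_comm (f * e)]
  simp only [mul_zero, zero_smul, add_zero]

def skeinUnit (e : S) (he : e * e = τ • e) (hab : a ^ 2 + a * b * τ + b ^ 2 = 0)
    (hab_one : a * b = 1) : Sˣ where
  val := a • 1 + b • e
  inv := b • 1 + a • e
  val_inv := by rw [skein_mul_skein_swap he hab, hab_one, one_smul]
  inv_val := by
    rw [skein_mul_skein_swap he (by linear_combination hab), mul_comm, hab_one, one_smul]

end Skein

section TemperleyLieb

variable (τ : ℂ)

theorem e₁_mul_e₂_mul_e₁ : e₁ τ * e₂ τ * e₁ τ = e₁ τ := by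
  simp only [e₁, e₂, ← map_mul]
  exact RingQuot.mkAlgHom_rel ℂ TLRel.rel121

theorem e₂_mul_e₁_mul_e₂ : e₂ τ * e₁ τ * e₂ τ = e₂ τ := by
  simp only [e₁, e₂, ← map_mul]
  exact RingQuot.mkAlgHom_rel ℂ TLRel.rel212

theorem e₁_mul_self : e₁ τ * e₁ τ = τ • e₁ τ := by
  simp only [e₁, ← map_mul, ← map_smul]
  exact RingQuot.mkAlgHom_rel ℂ TLRel.rel11

theorem e₂_mul_self : e₂ τ * e₂ τ = τ • e₂ τ := by
  simp only [e₂, ← map_mul, ← map_smul]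
  exact RingQuot.mkAlgHom_rel ℂ TLRel.rel22

end TemperleyLieb

theorem B3.exists_hom_of_braid {G : Type*} [Group G] (x y : G) (h : x * y * x = y * x * y) :
    ∃ φ : B3 →* G, φ (PresentedGroup.of 0) = x ∧ φ (PresentedGroup.of 1) = y := by
  have hrel : ∀ r ∈ braidRels, FreeGroup.lift ![x, y] r = 1 := by
    rintro r rfl
    simp only [map_mul, map_inv, FreeGroup.lift_apply_of, Matrix.cons_val_zero,
      Matrix.cons_val_one, h, mul_inv_cancel]
  exact ⟨PresentedGroup.toGroup hrel, PresentedGroup.toGroup.of hrel,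
    PresentedGroup.toGroup.of hrel⟩

/-- For `A ≠ 0`, `τ = -A² - A⁻²`, there is a group homomorphism from `B₃` to the units of
`TL₃` sending `σᵢ` to `A·1 + A⁻¹·eᵢ`. -/
theorem braid_to_TL3 (A : ℂ) (hA : A ≠ 0) (τ : ℂ) (hτ : τ = -A ^ 2 - A⁻¹ ^ 2) :
    ∃ φ : B3 →* (TL3 τ)ˣ,
      (φ (PresentedGroup.of 0) : TL3 τ) = A • (1 : TL3 τ) + A⁻¹ • e₁ τ ∧
      (φ (PresentedGroup.of 1) : TL3 τ) = A • (1 : TL3 τ) + A⁻¹ • e₂ τ := by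
  have hA_inv : A * A⁻¹ = 1 := mul_inv_cancel₀ hA
  have hquad : A ^ 2 + A * A⁻¹ * τ + A⁻¹ ^ 2 = 0 := by
    rw [hA_inv, hτ]
    ring
  let σ₁ := skeinUnit (e₁ τ) (e₁_mul_self τ) hquad hA_inv
  let σ₂ := skeinUnit (e₂ τ) (e₂_mul_self τ) hquad hA_inv
  have hbraid : σ₁ * σ₂ * σ₁ = σ₂ * σ₁ * σ₂ := Units.ext <|
    skein_braid (e₁_mul_self τ) (e₂_mul_self τ) (e₁_mul_e₂_mul_e₁ τ) (e₂_mul_e₁_mul_e₂ τ) hquad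
  obtain ⟨φ, hφ₁, hφ₂⟩ := B3.exists_hom_of_braid σ₁ σ₂ hbraid
  exact ⟨φ, by rw [hφ₁]; rfl, by rw [hφ₂]; rfl⟩
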